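/- For every k ≥ 2, any additive-basis order D such that all sufficiently large multiples of g_k are sums of at most D base-k digitally balanced numbers must satisfy D ≥ k^{k−1} + 1. -/

import Mathlib

/-! The digit strings `0 1 2 … (k-1) 0 1 … (k-1)` and `1 0 2 … (k-1) 0 1 … (k-1)` (least significant
digit first) are both balanced and their values differ by `k - 1`, so `g ∣ k - 1`, and hence `g`
divides `k ^ (k * N + (k - 1)) - 1 ≥ N`. A balanced number has a multiple of `k` digits, so each
balanced summand of this target has at most `k * N` digits, i.e. is at most `k ^ (k * N) - 1`, and
so `k ^ (k - 1)` such summands fall short of the target. -/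

def DigBal (k n : ℕ) : Prop :=
  ∀ i j : ℕ, i < k → j < k → (Nat.digits k n).count i = (Nat.digits k n).count j

open Finset in
theorem DigBal.dvd_length_digits {k n : ℕ} (hk : 1 < k) (hn : DigBal k n) :
    k ∣ (k.digits n).length := by
  have hsum : ∑ i ∈ range k, (k.digits n).count i = (k.digits n).length := by
    simpa using Multiset.sum_count_eq_card (s := range k) (m := (k.digits n : Multiset ℕ))
      fun i hi => mem_range.2 (Nat.digits_lt_base hk hi)
  rw [← hsum, sum_congr rfl fun i hi => hn i 0 (mem_range.1 hi) (by omega), sum_const,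
    card_range, smul_eq_mul]
  exact dvd_mul_right k _

theorem DigBal.lt_pow_of_lt_pow_add {k n s r : ℕ} (hk : 1 < k) (hn : DigBal k n) (hr : r < k)
    (h : n < k ^ (k * s + r)) : n < k ^ (k * s) := by
  rw [← Nat.digits_length_le_iff hk] at h ⊢
  obtain ⟨c, hc⟩ := hn.dvd_length_digits hk
  rw [hc] at h ⊢
  have : c < s + 1 := Nat.lt_of_mul_lt_mul_left (a := k) (by rw [mul_add, mul_one]; omega)
  exact Nat.mul_le_mul_left k (by omega)

theorem digBal_ofDigits_of_perm {k : ℕ} (hk : 1 < k) {L : List ℕ}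
    (hL : L.Perm (List.range k ++ List.range k)) (hlast : ∀ h : L ≠ [], L.getLast h ≠ 0) :
    DigBal k (Nat.ofDigits k L) := by
  intro i j hi hj
  have hdig : ∀ x ∈ L, x < k := fun x hx => by simpa using hL.subset hx
  rw [Nat.digits_ofDigits k hk L hdig hlast, hL.count_eq, hL.count_eq]
  simp [List.count_append, List.count_range, hi, hj]

theorem exists_digBal_add_sub_one {k : ℕ} (hk : 1 < k) :
    ∃ n, 0 < n ∧ DigBal k n ∧ DigBal k (n + (k - 1)) := by
  set t := List.range' 2 (k - 2) ++ List.range k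
  have hrange : List.range k = 0 :: 1 :: List.range' 2 (k - 2) := by
    obtain ⟨j, rfl⟩ : ∃ j, k = j + 2 := ⟨k - 2, by omega⟩
    simp [List.range_eq_range', List.range'_succ]
  have hlast : ∀ a b (h : a :: b :: t ≠ []), (a :: b :: t).getLast h ≠ 0 := by
    intro a b h
    have ht : t ≠ [] := by simp [t, hrange]
    rw [List.getLast_cons (by simp), List.getLast_cons ht,
      List.getLast_append_of_ne_nil _ (by simp [hrange]), List.getLast_range]
    omega
  have hperm : (0 :: 1 :: t).Perm (List.range k ++ List.range k) :=
    .of_eq (by simp [t, hrange])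
  refine ⟨Nat.ofDigits k (1 :: 0 :: t), by simp [Nat.ofDigits_cons],
    digBal_ofDigits_of_perm hk ((List.Perm.swap 0 1 t).trans hperm) (hlast 1 0), ?_⟩
  convert digBal_ofDigits_of_perm hk hperm (hlast 0 1) using 1
  simp only [Nat.ofDigits_cons]
  zify [hk.le]
  ring

theorem dvd_sub_one_of_forall_digBal_dvd {k g : ℕ} (hk : 1 < k)
    (hg : ∀ n, 0 < n → DigBal k n → g ∣ n) : g ∣ k - 1 := by
  obtain ⟨n, hn0, hn, hn'⟩ := exists_digBal_add_sub_one hk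
  exact (Nat.dvd_add_right (hg n hn0 hn)).1 (hg _ (by omega) hn')

theorem lower_bound_order (k : ℕ) (hk : 2 ≤ k) (g : ℕ)
    (hg : ∀ d : ℕ, (∀ n : ℕ, 0 < n → DigBal k n → d ∣ n) ↔ d ∣ g)
    (D N : ℕ)
    (hD : ∀ m : ℕ, N ≤ m → g ∣ m →
      ∃ l : List ℕ, l.length ≤ D ∧ (∀ x ∈ l, DigBal k x) ∧ l.sum = m) :
    k ^ (k - 1) + 1 ≤ D := by
  by_contra! hDQ
  set P := k ^ (k * N)
  set Q := k ^ (k - 1)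
  have hPQ : k ^ (k * N + (k - 1)) = P * Q := pow_add k _ _
  have hgm : g ∣ P * Q - 1 := by
    rw [← hPQ]
    refine (dvd_sub_one_of_forall_digBal_dvd hk ((hg g).2 dvd_rfl)).trans ?_
    simpa using Nat.sub_dvd_pow_sub_pow k 1 (k * N + (k - 1))
  have hNP : N < P := (Nat.lt_pow_self hk).trans_le
    (Nat.pow_le_pow_right (by omega) (Nat.le_mul_of_pos_left N (by omega)))
  have hQ : 1 < Q := Nat.lt_of_lt_of_le hk (le_self_pow₀ (by omega) (by omega))
  have hNPQ : N < P * Q := hNP.trans_le (Nat.le_mul_of_pos_right P (by omega))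
  have hQPQ : Q ≤ P * Q := Nat.le_mul_of_pos_left Q (by omega)
  obtain ⟨l, hlen, hbal, hsum⟩ := hD (P * Q - 1) (by omega) hgm
  have hlt : ∀ x ∈ l, x ≤ P - 1 := fun x hx => by
    have hxs : x ≤ P * Q - 1 := hsum ▸ List.le_sum_of_mem hx
    have := (hbal x hx).lt_pow_of_lt_pow_add (by omega) (by omega) (hPQ ▸ (by omega : x < P * Q))
    omega
  refine lt_irrefl (P * Q - 1) ?_
  calc P * Q - 1 = l.sum := hsum.symm
    _ ≤ l.length * (P - 1) := by simpa using List.sum_le_card_nsmul l _ hlt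
    _ ≤ Q * (P - 1) := Nat.mul_le_mul_right _ (by omega)
    _ = P * Q - Q := by rw [Nat.mul_sub_one, mul_comm]
    _ < P * Q - 1 := Nat.sub_lt_sub_left (by omega) hQ
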